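/- arXiv:1709.08427 — 3 statements merged into one kernel-verified Lean document; each statement's English description precedes it below -/
import Mathlib

section
/- Let σ ∈ S_m be an indecomposable 321-avoiding permutation with m > 1, let π ∈ S_n be 321-avoiding, and let 1 ≤ k_1 < … < k_m ≤ n. Then (k_1, …, k_m) is an occurrence of σ in π if and only if: (i) k_i is an exceedance of π whenever i is an exceedance of σ; (ii) π(k_i) ≤ k_i whenever σ(i) ≤ i; and (iii) for all i < j with σ(i) > i and σ(j) ≤ j, one has π(k_i) > π(k_j) if and only if σ(i) > σ(j). -/
/-- The composition (direct sum) `σ * τ` of two permutations of finite intervals. -/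
def permComp : (Σ n : ℕ, Equiv.Perm (Fin n)) → (Σ n : ℕ, Equiv.Perm (Fin n)) →
    (Σ n : ℕ, Equiv.Perm (Fin n))
  | ⟨m, σ⟩, ⟨n, τ⟩ => ⟨m + n, finSumFinEquiv.permCongr (Equiv.Perm.sumCongr σ τ)⟩

/-- A permutation (of positive length) is decomposable if it is a composition of two
permutations of positive lengths. -/
def Decomposable (p : Σ n : ℕ, Equiv.Perm (Fin n)) : Prop :=
  ∃ q r : Σ n : ℕ, Equiv.Perm (Fin n), 1 ≤ q.1 ∧ 1 ≤ r.1 ∧ p = permComp q r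

/-- A permutation of positive length is indecomposable (a block) if it is not decomposable. -/
def Indecomposable (p : Σ n : ℕ, Equiv.Perm (Fin n)) : Prop :=
  1 ≤ p.1 ∧ ¬ Decomposable p

/-- `π` avoids the pattern 321. -/
def Avoids321 {n : ℕ} (π : Equiv.Perm (Fin n)) : Prop :=
  ¬ ∃ i j k : Fin n, i < j ∧ j < k ∧ π k < π j ∧ π j < π i

/-!
Pigeonhole across a cut shows that in a 321-avoiding permutation every entry to the left of
an exceedance is smaller than it, and every entry to the right of a weak deficiency is larger.
So the relative order of `π (k i)` and `π (k j)` is forced by (i) and (ii) except when an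
exceedance precedes a weak deficiency, which is what (iii) prescribes. Conversely, every
exceedance of `σ` is the top of an inversion and, `σ` being indecomposable, every weak
deficiency is the bottom of one; an occurrence carries these inversions into `π`, which forces
(i) and (ii).
-/

namespace Equiv.Perm

variable {α : Type*}

theorem exists_mem_apply_notMem (π : Perm α) {s : Finset α} {x : α} (hx : x ∉ s)
    (hπx : π x ∈ s) : ∃ y ∈ s, π y ∉ s := by
  by_contra! h
  have hs : s.map π.toEmbedding = s := Finset.map_eq_of_subset fun _ hy => by
    obtain ⟨z, hz, rfl⟩ := Finset.mem_map.mp hy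
    exact h z hz
  obtain ⟨y, hy, hyx⟩ := Finset.mem_map.mp (hs.symm ▸ hπx)
  exact hx (π.injective hyx ▸ hy)

variable [LinearOrder α]

theorem exists_lt_le_apply [LocallyFiniteOrderBot α] (π : Perm α) {c x : α} (hx : c ≤ x)
    (hπx : π x < c) : ∃ y < c, c ≤ π y := by
  simpa using π.exists_mem_apply_notMem (s := Finset.Iio c) (by simpa using hx)
    (by simpa using hπx)

theorem exists_lt_apply_le [LocallyFiniteOrderTop α] (π : Perm α) {c x : α} (hx : x ≤ c)
    (hπx : c < π x) : ∃ y, c < y ∧ π y ≤ c := by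
  simpa using π.exists_mem_apply_notMem (s := Finset.Ioi c) (by simpa using hx)
    (by simpa using hπx)

theorem exists_lt_apply_lt_of_lt_apply [LocallyFiniteOrderTop α] (π : Perm α) {i : α}
    (hi : i < π i) : ∃ j, i < j ∧ π j < π i := by
  obtain ⟨j, hij, hj⟩ := π.exists_lt_apply_le le_rfl hi
  exact ⟨j, hij, hj.trans_lt hi⟩

theorem exists_lt_apply_lt_of_apply_lt [LocallyFiniteOrderBot α] (π : Perm α) {i : α}
    (hi : π i < i) : ∃ j < i, π i < π j := by
  obtain ⟨j, hji, hj⟩ := π.exists_lt_le_apply le_rfl hi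
  exact ⟨j, hji, hi.trans_le hj⟩

end Equiv.Perm

namespace Avoids321

variable {n : ℕ} {π : Equiv.Perm (Fin n)} {p q : Fin n}

theorem apply_lt_of_lt_apply (hπ : Avoids321 π) (hpq : p < q) (hq : q < π q) : π p < π q := by
  by_contra! hqp
  have hqp : π q < π p := hqp.lt_of_ne (π.injective.ne hpq.ne')
  obtain ⟨r, hqr, hr⟩ := π.exists_lt_apply_le le_rfl hq
  exact hπ ⟨p, q, r, hpq, hqr, hr.trans_lt hq, hqp⟩

theorem apply_lt_of_apply_le (hπ : Avoids321 π) (hpq : p < q) (hp : π p ≤ p) : π p < π q := by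
  by_contra! hqp
  have hqp : π q < π p := hqp.lt_of_ne (π.injective.ne hpq.ne')
  obtain ⟨s, hsp, hs⟩ := π.exists_lt_le_apply hpq.le (hqp.trans_le hp)
  have hps : π p < π s := (hp.trans hs).lt_of_ne (π.injective.ne hsp.ne')
  exact hπ ⟨s, p, q, hsp, hpq, hqp, hps⟩

end Avoids321

theorem decomposable_of_forall_lt {d l : ℕ} (hd : 1 ≤ d) (hl : 1 ≤ l)
    (σ : Equiv.Perm (Fin (d + l))) (h : ∀ x : Fin (d + l), (x : ℕ) < d → (σ x : ℕ) < d) :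
    Decomposable ⟨d + l, σ⟩ := by
  have h' : ∀ x : Fin (d + l), d ≤ (x : ℕ) → d ≤ (σ x : ℕ) := by
    intro x hx
    by_contra! hσx
    obtain ⟨y, hy, hσy⟩ := σ.exists_mem_apply_notMem
      (s := Finset.univ.filter fun y : Fin (d + l) => (y : ℕ) < d) (by simpa using hx)
      (by simpa using hσx)
    simp only [Finset.mem_filter, Finset.mem_univ, true_and] at hy hσy
    exact hσy (h y hy)
  let σ₁ : Equiv.Perm (Fin d) := Equiv.ofBijective
    (fun a => (σ (Fin.castAdd l a)).castLT (h _ a.isLt))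
    (Finite.injective_iff_bijective.mp fun a b hab =>
      Fin.castAdd_injective _ _ (σ.injective (Fin.ext (by simpa using congrArg Fin.val hab))))
  let σ₂ : Equiv.Perm (Fin l) := Equiv.ofBijective
    (fun a => ⟨σ (Fin.natAdd d a) - d, by have := h' (Fin.natAdd d a) (by simp); omega⟩)
    (Finite.injective_iff_bijective.mp fun a b hab => by
      have ha := h' (Fin.natAdd d a) (by simp)
      have hb := h' (Fin.natAdd d b) (by simp)
      have hab : (σ (Fin.natAdd d a) : ℕ) - d = σ (Fin.natAdd d b) - d := congrArg Fin.val hab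
      exact Fin.natAdd_injective _ _ (σ.injective (Fin.ext (by omega))))
  refine ⟨⟨d, σ₁⟩, ⟨l, σ₂⟩, hd, hl, ?_⟩
  simp only [permComp]
  congr 1
  ext x
  induction x using Fin.addCases with
  | left a => simp [σ₁]
  | right a =>
    have := h' (Fin.natAdd d a) (by simp)
    simp [σ₂]
    omega

namespace Indecomposable

variable {m : ℕ} {σ : Equiv.Perm (Fin m)}

theorem exists_lt_le_apply (hσ : Indecomposable ⟨m, σ⟩) {d : ℕ} (hd : 1 ≤ d) (hdm : d < m) :
    ∃ x : Fin m, (x : ℕ) < d ∧ d ≤ (σ x : ℕ) := by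
  obtain ⟨l, rfl⟩ : ∃ l, m = d + l := ⟨m - d, by omega⟩
  by_contra! h
  exact hσ.2 (decomposable_of_forall_lt hd (by omega) σ h)

theorem exists_lt_apply_lt_of_apply_le (hσ : Indecomposable ⟨m, σ⟩) (hm : 1 < m) {i : Fin m}
    (hi : σ i ≤ i) : ∃ j < i, σ i < σ j := by
  rcases hi.lt_or_eq with hi | hi
  · exact σ.exists_lt_apply_lt_of_apply_lt hi
  rcases Nat.eq_zero_or_pos i with hi0 | hi0
  · obtain ⟨x, hx, hσx⟩ := hσ.exists_lt_le_apply le_rfl hm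
    obtain rfl : x = i := Fin.ext (by omega)
    rw [hi] at hσx
    omega
  · obtain ⟨j, hji, hσj⟩ := hσ.exists_lt_le_apply hi0 i.isLt
    have hne : σ i ≠ σ j := σ.injective.ne (ne_of_gt hji)
    refine ⟨j, hji, hne.lt_of_le ?_⟩
    rwa [hi]

end Indecomposable

theorem apply_lt_apply_of_apply_lt {m n : ℕ} {σ : Equiv.Perm (Fin m)} {π : Equiv.Perm (Fin n)}
    {k : Fin m → Fin n} (hσ : Avoids321 σ) (hπ : Avoids321 π) (hk : StrictMono k)
    (hexc : ∀ i, i < σ i → k i < π (k i)) (hdef : ∀ i, σ i ≤ i → π (k i) ≤ k i)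
    (hcross : ∀ i j, i < j → i < σ i → σ j ≤ j → (π (k j) < π (k i) ↔ σ j < σ i))
    {i j : Fin m} (hσij : σ i < σ j) : π (k i) < π (k j) := by
  rcases lt_trichotomy i j with hij | rfl | hji
  · rcases lt_or_ge j (σ j) with hj | hj
    · exact hπ.apply_lt_of_lt_apply (hk hij) (hexc j hj)
    rcases lt_or_ge i (σ i) with hi | hi
    · exact (π.injective.ne (hk hij).ne).lt_of_le
        (not_lt.mp fun h => hσij.not_gt ((hcross i j hij hi hj).mp h))
    · exact hπ.apply_lt_of_apply_le (hk hij) (hdef i hi)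
  · exact absurd hσij (lt_irrefl _)
  · have hj : j < σ j := not_le.mp fun h => (hσ.apply_lt_of_apply_le hji h).not_gt hσij
    have hi : σ i ≤ i := not_lt.mp fun h => (hσ.apply_lt_of_lt_apply hji h).not_gt hσij
    exact (hcross j i hji hj hi).mpr hσij

theorem occurrence_characterization (m n : ℕ) (hm : 1 < m)
    (σ : Equiv.Perm (Fin m)) (hσ : Avoids321 σ) (hind : Indecomposable ⟨m, σ⟩)
    (π : Equiv.Perm (Fin n)) (hπ : Avoids321 π)
    (k : Fin m → Fin n) (hk : StrictMono k) :
    (∀ i j : Fin m, π (k i) < π (k j) ↔ σ i < σ j) ↔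
      ((∀ i : Fin m, i < σ i → k i < π (k i)) ∧
       (∀ i : Fin m, σ i ≤ i → π (k i) ≤ k i) ∧
       (∀ i j : Fin m, i < j → i < σ i → σ j ≤ j →
         (π (k j) < π (k i) ↔ σ j < σ i))) := by
  constructor
  · intro H
    refine ⟨fun i hi => ?_, fun i hi => ?_, fun i j _ _ _ => H j i⟩
    · obtain ⟨j, hij, hji⟩ := σ.exists_lt_apply_lt_of_lt_apply hi
      exact not_le.mp fun h => ((H j i).mpr hji).not_gt (hπ.apply_lt_of_apply_le (hk hij) h)
    · obtain ⟨j, hji, hij⟩ := hind.exists_lt_apply_lt_of_apply_le hm hi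
      exact not_lt.mp fun h => ((H i j).mpr hij).not_gt (hπ.apply_lt_of_lt_apply (hk hji) h)
  · rintro ⟨hexc, hdef, hcross⟩
    have hmono : StrictMono fun v => π (k (σ.symm v)) := fun v w hvw =>
      apply_lt_apply_of_apply_lt hσ hπ hk hexc hdef hcross (by simpa using hvw)
    intro i j
    simpa using hmono.lt_iff_lt (a := σ i) (b := σ j)
end

section
/- Let σ ∈ S_m be an indecomposable permutation (m ≥ 1), let π ∈ S_n, and let Δ* = max_{1≤i≤n} |π(i) − i|. If (k_1, …, k_m) is an occurrence of σ in π, then 0 < k_i − k_1 ≤ 2 m Δ* for every i = 2, …, m. Consequently, the number of occurrences of σ in π is at most (2m Δ*)^{m−1} · n. -/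
/-- `f` is an occurrence of the pattern `σ ∈ S_m` in `π ∈ S_n`. -/
def IsOcc {m n : ℕ} (σ : Equiv.Perm (Fin m)) (π : Equiv.Perm (Fin n))
    (f : Fin m → Fin n) : Prop :=
  StrictMono f ∧ ∀ j k : Fin m, π (f j) < π (f k) ↔ σ j < σ k

/-- `n_σ(π)`: the number of occurrences of `σ` in `π`. -/
noncomputable def occCount {m n : ℕ} (σ : Equiv.Perm (Fin m))
    (π : Equiv.Perm (Fin n)) : ℕ :=
  Nat.card {f : Fin m → Fin n // IsOcc σ π f}

open Equiv Set

theorem decomposable_of_mapsTo_range_castAdd {t r : ℕ} (ht : 1 ≤ t) (hr : 1 ≤ r)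
    {σ : Perm (Fin (t + r))} (h : MapsTo σ (range (Fin.castAdd r)) (range (Fin.castAdd r))) :
    Decomposable ⟨t + r, σ⟩ := by
  set τ := finSumFinEquiv.symm.permCongr σ
  have hτ : MapsTo τ (range Sum.inl) (range Sum.inl) := by
    rintro _ ⟨a, rfl⟩
    obtain ⟨b, hb⟩ := h ⟨a, rfl⟩
    exact ⟨b, by simp [τ, permCongr_apply, ← hb]⟩
  obtain ⟨⟨q, q'⟩, hqq'⟩ := Perm.mem_sumCongrHom_range_of_perm_mapsTo_inl hτ
  refine ⟨⟨t, q⟩, ⟨r, q'⟩, ht, hr, ?_⟩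
  simp only [Perm.sumCongrHom_apply] at hqq'
  simp [permComp, hqq', τ, ← permCongr_symm]

theorem Indecomposable.exists_inversion_across {m : ℕ} {σ : Perm (Fin m)}
    (hσ : Indecomposable ⟨m, σ⟩) {t : ℕ} (ht : 0 < t) (htm : t < m) :
    ∃ a b : Fin m, (a : ℕ) < t ∧ t ≤ (b : ℕ) ∧ σ b < σ a := by
  obtain ⟨r, rfl⟩ := Nat.exists_eq_add_of_le htm.le
  by_contra! h
  refine hσ.2 (decomposable_of_mapsTo_range_castAdd ht (by omega) ?_)
  have hs : range (Fin.castAdd r) = {i : Fin (t + r) | (i : ℕ) < t} := Fin.range_castLE _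
  rw [hs]
  by_cases hc : MapsTo σ {i | (i : ℕ) < t}ᶜ {i | (i : ℕ) < t}ᶜ
  · have hbij := ((toFinite _).injOn_iff_bijOn_of_mapsTo hc).mp σ.injective.injOn
    simpa using hbij.surjOn.mapsTo_compl σ.injective
  · obtain ⟨b, hb, hσb⟩ : ∃ b : Fin (t + r), t ≤ (b : ℕ) ∧ (σ b : ℕ) < t := by
      simpa [MapsTo] using hc
    exact fun a ha => lt_of_le_of_lt (Fin.le_def.mp (h a b ha hb)) hσb

theorem Fin.apply_le_apply_zero_add_mul {k d : ℕ} {g : Fin (k + 1) → ℕ}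
    (h : ∀ i : Fin k, g i.succ ≤ g i.castSucc + d) (i : Fin (k + 1)) : g i ≤ g 0 + d * i := by
  induction i using Fin.induction with
  | zero => simp
  | succ i ih =>
    have := h i
    simp only [Fin.val_castSucc] at ih
    rw [Fin.val_succ, mul_add_one]
    omega

theorem Nat.card_le_of_forall_succ_mem_Ioc {k n K : ℕ} (P : (Fin (k + 1) → Fin n) → Prop)
    (hP : ∀ f, P f → ∀ i : Fin k, f 0 < f i.succ ∧ (f i.succ : ℕ) ≤ f 0 + K) :
    Nat.card {f // P f} ≤ K ^ k * n := by
  let encode : {f // P f} → Fin n × (Fin k → Fin K) := fun f =>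
    (f.1 0, fun i => ⟨f.1 i.succ - f.1 0 - 1, by have := hP f.1 f.2 i; omega⟩)
  have hencode : Function.Injective encode := by
    intro f g hfg
    simp only [encode, Prod.mk.injEq, funext_iff, Fin.ext_iff] at hfg
    obtain ⟨h0, hsucc⟩ := hfg
    ext i : 3
    cases i using Fin.cases with
    | zero => exact h0
    | succ i =>
      have := hP f.1 f.2 i
      have := hP g.1 g.2 i
      have := hsucc i
      omega
  simpa [mul_comm] using Nat.card_le_card_of_injective encode hencode

theorem Perm.le_add_two_mul_of_apply_lt {n Δ : ℕ} {π : Perm (Fin n)}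
    (hΔ : ∀ i, ((π i : ℤ) - i).natAbs ≤ Δ) {k l : Fin n} (h : π l < π k) :
    (l : ℕ) ≤ k + 2 * Δ := by
  have := hΔ k
  have := hΔ l
  have := Fin.lt_def.mp h
  omega

namespace IsOcc

variable {k n Δ : ℕ} {σ : Perm (Fin (k + 1))} {π : Perm (Fin n)} {f : Fin (k + 1) → Fin n}

theorem succ_le_castSucc_add (hf : IsOcc σ π f) (hσ : Indecomposable ⟨k + 1, σ⟩)
    (hΔ : ∀ i, ((π i : ℤ) - i).natAbs ≤ Δ) (i : Fin k) :
    (f i.succ : ℕ) ≤ f i.castSucc + 2 * Δ := by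
  obtain ⟨a, b, ha, hb, hba⟩ := hσ.exists_inversion_across (t := i + 1) (by omega) (by omega)
  have hfa : f a ≤ f i.castSucc := hf.1.monotone (Fin.le_def.mpr (by simp; omega))
  have hfb : f i.succ ≤ f b := hf.1.monotone (Fin.le_def.mpr (by simp; omega))
  have := Perm.le_add_two_mul_of_apply_lt hΔ ((hf.2 b a).mpr hba)
  rw [Fin.le_def] at hfa hfb
  omega

theorem le_zero_add (hf : IsOcc σ π f) (hσ : Indecomposable ⟨k + 1, σ⟩)
    (hΔ : ∀ i, ((π i : ℤ) - i).natAbs ≤ Δ) (i : Fin (k + 1)) :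
    (f i : ℕ) ≤ f 0 + 2 * (k + 1) * Δ :=
  calc (f i : ℕ) ≤ f 0 + 2 * Δ * i :=
        Fin.apply_le_apply_zero_add_mul (g := fun j => (f j : ℕ)) (hf.succ_le_castSucc_add hσ hΔ) i
    _ ≤ f 0 + 2 * (k + 1) * Δ := by
        have := i.isLt
        rw [mul_right_comm]
        gcongr

end IsOcc

theorem occurrences_localized_and_count_bound (m n : ℕ) (hm : 1 ≤ m)
    (σ : Equiv.Perm (Fin m)) (hind : Indecomposable ⟨m, σ⟩)
    (π : Equiv.Perm (Fin n)) (Δ : ℕ)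
    (hΔ : Δ = Finset.univ.sup (fun i : Fin n => ((π i : ℤ) - (i : ℤ)).natAbs)) :
    (∀ f : Fin m → Fin n, IsOcc σ π f → ∀ i : Fin m, (⟨0, hm⟩ : Fin m) < i →
      f ⟨0, hm⟩ < f i ∧ (f i : ℕ) ≤ (f ⟨0, hm⟩ : ℕ) + 2 * m * Δ) ∧
    occCount σ π ≤ (2 * m * Δ) ^ (m - 1) * n := by
  obtain ⟨k, rfl⟩ : ∃ k, m = k + 1 := ⟨m - 1, by omega⟩
  have hπ : ∀ i, ((π i : ℤ) - i).natAbs ≤ Δ := fun i =>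
    hΔ ▸ Finset.le_sup (f := fun i : Fin n => ((π i : ℤ) - (i : ℤ)).natAbs) (Finset.mem_univ i)
  have hloc : ∀ f : Fin (k + 1) → Fin n, IsOcc σ π f → ∀ i, 0 < i →
      f 0 < f i ∧ (f i : ℕ) ≤ f 0 + 2 * (k + 1) * Δ := fun f hf i hi =>
    ⟨hf.1 hi, hf.le_zero_add hind hπ i⟩
  refine ⟨hloc, ?_⟩
  simpa [occCount] using Nat.card_le_of_forall_succ_mem_Ioc (IsOcc σ π) fun f hf i =>
    hloc f hf i.succ i.succ_pos
end

section
/- The number of 321-avoiding permutations of {1,…,n} equals the n-th Catalan number C_n = (1/(n+1)) · C(2n, n). -/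
open Finset Function

theorem Finset.card_filter_not_and_add_card_filter_and {γ : Type*} [Fintype γ] (p q : γ → Prop)
    [DecidablePred p] [DecidablePred q] : #{i | ¬p i ∧ q i} + #{i | p i ∧ q i} = #{i | q i} := by
  rw [← card_filter_add_card_filter_not (s := univ.filter q) (fun i => ¬ p i)]
  simp only [filter_filter, not_not, and_comm]

section SubtypeOrder

variable {γ : Type*} [LinearOrder γ] [Fintype γ]

theorem Finset.card_filter_subtype_le (p : γ → Prop)
    [DecidablePred p] (x : {i // p i}) :
    #{a : {i // p i} | a ≤ x} = #{i : γ | p i ∧ i ≤ x} := by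
  rw [← card_map (Function.Embedding.subtype p)]
  congr 1
  ext i
  simp only [mem_map, mem_filter, mem_univ, true_and, Function.Embedding.coe_subtype]
  exact ⟨fun ⟨⟨j, hj⟩, hle, hji⟩ => hji ▸ ⟨hj, hle⟩, fun ⟨hi, hle⟩ => ⟨⟨i, hi⟩, hle, rfl⟩⟩

theorem OrderIso.subtype_apply_le_of_card_le {p q : γ → Prop} [DecidablePred p]
    [DecidablePred q] (e : {i // p i} ≃o {i // q i}) {x : {i // p i}} {y : γ}
    (h : #{i | p i ∧ i ≤ x} ≤ #{i | q i ∧ i ≤ y}) : (e x : γ) ≤ y := by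
  by_contra! hlt
  have hcard : #{i | p i ∧ i ≤ x} = #{i | q i ∧ i ≤ e x} := by
    rw [← card_filter_subtype_le, ← card_filter_subtype_le]
    exact card_equiv e.toEquiv (by simp)
  have hsub : univ.filter (fun i => q i ∧ i ≤ y) ⊂ univ.filter (fun i => q i ∧ i ≤ e x) :=
    (ssubset_iff_of_subset (monotone_filter_right _ fun _ _ hb => ⟨hb.1, hb.2.trans hlt.le⟩)).2
      ⟨e x, by simp [(e x).2], by simpa using fun _ => hlt⟩
  exact (card_lt_card hsub).not_ge (hcard ▸ h)

end SubtypeOrder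

section Records

variable {α β : Type*}

def records [LT α] [LT β] (f : α → β) : Set α := {i | ∀ j < i, f j < f i}

theorem strictMonoOn_records [Preorder α] [Preorder β] (f : α → β) :
    StrictMonoOn f (records f) :=
  fun _ _ _ hb hab => hb _ hab

variable [LinearOrder α] [PartialOrder β] {f : α → β}

theorem Monotone.le_iff_le_of_mem_records (hf : Monotone f) {r : α} (hr : r ∈ records f)
    (i : α) : f r ≤ f i ↔ r ≤ i :=
  ⟨fun h => not_lt.1 fun hir => (hr i hir).not_ge h, fun h => hf h⟩

theorem Monotone.exists_mem_records_le_eq [WellFoundedLT α] (hf : Monotone f) (i : α) :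
    ∃ r ∈ records f, r ≤ i ∧ f r = f i := by
  obtain ⟨r, hr, hmin⟩ := wellFounded_lt.has_min {j | f j = f i} ⟨i, rfl⟩
  refine ⟨r, fun j hjr => (hf hjr.le).lt_of_ne fun h => hmin j (h.trans hr) hjr,
    not_lt.1 fun hir => hmin i rfl hir, hr⟩

end Records

section RunningMax

variable {α β : Type*} [LinearOrder α] [Fintype α] [LinearOrder β] (f : α → β)

def runningMax (i : α) : β := ({j | j ≤ i} : Finset α).sup' ⟨i, by simp⟩ f

variable {f}

theorem le_runningMax {i j : α} (h : j ≤ i) : f j ≤ runningMax f i :=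
  le_sup' f (by simpa using h)

theorem exists_le_apply_eq_runningMax (i : α) : ∃ j ≤ i, f j = runningMax f i := by
  obtain ⟨j, hj, h⟩ := exists_mem_eq_sup' (s := {j | j ≤ i}) ⟨i, by simp⟩ f
  exact ⟨j, by simpa using hj, h.symm⟩

theorem monotone_runningMax : Monotone (runningMax f) := fun _ _ h =>
  sup'_mono f (monotone_filter_right _ fun _ _ hj => le_trans hj h) _

theorem le_runningMax_self {f : α → α} (hf : Injective f) (i : α) : i ≤ runningMax f i := by
  by_contra! hlt
  have hsub : univ.filter (· ≤ runningMax f i) ⊂ univ.filter (· ≤ i) :=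
    (ssubset_iff_of_subset (monotone_filter_right _ fun _ _ hb => hb.trans hlt.le)).2
      ⟨i, by simp, by simpa using hlt⟩
  have hinj := card_le_card_of_injOn f (s := univ.filter (· ≤ i))
    (t := univ.filter (· ≤ runningMax f i))
    (fun j hj => by simpa using le_runningMax (by simpa using hj)) hf.injOn
  exact (card_lt_card hsub).not_ge hinj

theorem mem_records_runningMax_iff (hf : Injective f) {i : α} :
    i ∈ records (runningMax f) ↔ f i = runningMax f i := by
  constructor
  · intro hi
    obtain ⟨k, hki, hk⟩ := exists_le_apply_eq_runningMax (f := f) i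
    obtain rfl | hlt := hki.eq_or_lt
    · exact hk
    · exact absurd (hi k hlt) (not_lt.2 (hk ▸ le_runningMax le_rfl))
  · intro hi j hji
    obtain ⟨k, hkj, hk⟩ := exists_le_apply_eq_runningMax (f := f) j
    rw [← hk]
    exact (le_runningMax (hkj.trans hji.le)).lt_of_ne (hi ▸ hf.ne (hkj.trans_lt hji).ne)

end RunningMax

section PermOfRunningMax

open Classical

variable {α : Type*} [LinearOrder α] [Fintype α] (f : α → α)

theorem card_compl_records_eq_card_compl_image :
    Fintype.card {i // i ∉ records f} = Fintype.card {v // v ∉ f '' records f} := by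
  rw [Fintype.card_subtype_compl, Fintype.card_subtype_compl,
    Fintype.card_congr (Equiv.Set.imageOfInjOn f _ (strictMonoOn_records f).injOn)]

noncomputable def nonRecordsOrderIso : {i // i ∉ records f} ≃o {v // v ∉ f '' records f} :=
  (Fintype.orderIsoFinOfCardEq _ rfl).symm.trans
    (Fintype.orderIsoFinOfCardEq _ (card_compl_records_eq_card_compl_image f).symm)

noncomputable def permOfRunningMax : Equiv.Perm α :=
  Equiv.subtypeCongr (Equiv.Set.imageOfInjOn f _ (strictMonoOn_records f).injOn)
    (nonRecordsOrderIso f).toEquiv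

variable {f}

theorem permOfRunningMax_apply_of_mem {i : α} (hi : i ∈ records f) :
    permOfRunningMax f i = f i := by
  simp [permOfRunningMax, Equiv.subtypeCongr, hi, Equiv.Set.imageOfInjOn]

theorem permOfRunningMax_apply_of_notMem {i : α} (hi : i ∉ records f) :
    permOfRunningMax f i = nonRecordsOrderIso f ⟨i, hi⟩ := by
  simp [permOfRunningMax, Equiv.subtypeCongr, hi]

theorem strictMonoOn_permOfRunningMax : StrictMonoOn (permOfRunningMax f) (records f)ᶜ := by
  intro i hi j hj hij
  rw [permOfRunningMax_apply_of_notMem hi, permOfRunningMax_apply_of_notMem hj]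
  exact (nonRecordsOrderIso f).strictMono hij

theorem Monotone.card_image_records_le (hf : Monotone f) (i : α) :
    #{v | v ∈ f '' records f ∧ v ≤ f i} = #{j | j ∈ records f ∧ j ≤ i} := by
  rw [← card_image_of_injOn (s := {j | j ∈ records f ∧ j ≤ i})
    ((strictMonoOn_records f).injOn.mono fun j hj => (mem_filter.1 hj).2.1)]
  congr 1
  ext v
  simp only [mem_filter, mem_univ, true_and, mem_image, Set.mem_image]
  constructor
  · rintro ⟨⟨r, hr, rfl⟩, hle⟩
    exact ⟨r, ⟨hr, (hf.le_iff_le_of_mem_records hr i).1 hle⟩, rfl⟩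
  · rintro ⟨r, ⟨hr, hle⟩, rfl⟩
    exact ⟨⟨r, hr, rfl⟩, hf hle⟩

theorem permOfRunningMax_apply_le (hf : Monotone f) (hle : ∀ i, i ≤ f i) (i : α) :
    permOfRunningMax f i ≤ f i := by
  by_cases hi : i ∈ records f
  · exact (permOfRunningMax_apply_of_mem hi).le
  rw [permOfRunningMax_apply_of_notMem hi]
  apply OrderIso.subtype_apply_le_of_card_le
  change #{j | j ∉ records f ∧ j ≤ i} ≤ #{v | v ∉ f '' records f ∧ v ≤ f i}
  have hpositions := card_filter_not_and_add_card_filter_and (· ∈ records f) (· ≤ i)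
  have hvalues := card_filter_not_and_add_card_filter_and (· ∈ f '' records f) (· ≤ f i)
  have hsub : #{j | j ≤ i} ≤ #{v | v ≤ f i} :=
    card_le_card (monotone_filter_right _ fun _ _ hj => le_trans hj (hle i))
  have := hf.card_image_records_le i
  omega

theorem eq_permOfRunningMax {σ : Equiv.Perm α} (hrec : ∀ i ∈ records f, σ i = f i)
    (hmono : StrictMonoOn σ (records f)ᶜ) : σ = permOfRunningMax f := by
  have hmaps : ∀ i : {i // i ∉ records f}, σ i ∉ f '' records f := by
    rintro ⟨i, hi⟩ ⟨r, hr, hri⟩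
    rw [← hrec r hr] at hri
    obtain rfl := σ.injective hri
    exact hi hr
  let g : {i // i ∉ records f} → {v // v ∉ f '' records f} := fun i => ⟨σ i, hmaps i⟩
  have hg : StrictMono g := fun i j hij => hmono i.2 j.2 hij
  have hg_surj : Surjective g := (Fintype.bijective_iff_injective_and_card g).2
    ⟨hg.injective, card_compl_records_eq_card_compl_image f⟩ |>.2
  have hgiso : g = nonRecordsOrderIso f :=
    (hg.range_inj (nonRecordsOrderIso f).strictMono).1 <| by
      rw [hg_surj.range_eq, (nonRecordsOrderIso f).surjective.range_eq]
  ext i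
  by_cases hi : i ∈ records f
  · rw [hrec i hi, permOfRunningMax_apply_of_mem hi]
  · rw [permOfRunningMax_apply_of_notMem hi, ← hgiso]

theorem runningMax_permOfRunningMax (hf : Monotone f) (hle : ∀ i, i ≤ f i) :
    runningMax (permOfRunningMax f) = f := by
  funext i
  apply le_antisymm
  · obtain ⟨j, hji, hj⟩ := exists_le_apply_eq_runningMax (f := permOfRunningMax f) i
    exact hj ▸ (permOfRunningMax_apply_le hf hle j).trans (hf hji)
  · obtain ⟨r, hr, hri, hfr⟩ := hf.exists_mem_records_le_eq i
    exact hfr ▸ permOfRunningMax_apply_of_mem hr ▸ le_runningMax hri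

theorem permOfRunningMax_runningMax {π : Equiv.Perm α}
    (h : StrictMonoOn π (records (runningMax π))ᶜ) : permOfRunningMax (runningMax π) = π :=
  (eq_permOfRunningMax (fun _ hi => (mem_records_runningMax_iff π.injective).1 hi) h).symm

end PermOfRunningMax

section Avoids321

variable {n : ℕ}

theorem Avoids321.strictMonoOn_compl_records {π : Equiv.Perm (Fin n)} (h : Avoids321 π) :
    StrictMonoOn π (records (runningMax π))ᶜ := by
  intro j hj k _ hjk
  by_contra! hkj
  obtain ⟨i, hij, hi⟩ := exists_le_apply_eq_runningMax (f := π) j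
  have hne : π j ≠ runningMax π j := fun h => hj ((mem_records_runningMax_iff π.injective).2 h)
  have hij' : i < j := hij.lt_of_ne (by rintro rfl; exact hne hi)
  exact h ⟨i, j, k, hij', hjk, hkj.lt_of_ne (π.injective.ne hjk.ne'),
    hi ▸ (le_runningMax le_rfl).lt_of_ne hne⟩

theorem avoids321_permOfRunningMax {f : Fin n → Fin n} (hf : Monotone f) (hle : ∀ i, i ≤ f i) :
    Avoids321 (permOfRunningMax f) := by
  have hbound := permOfRunningMax_apply_le hf hle
  rintro ⟨i, j, k, hij, hjk, hkj, hji⟩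
  have hj : j ∉ records f := fun hj =>
    hji.not_ge ((hbound i).trans (hf hij.le) |>.trans_eq (permOfRunningMax_apply_of_mem hj).symm)
  have hk : k ∉ records f := fun hk =>
    hkj.not_ge ((hbound j).trans (hf hjk.le) |>.trans_eq (permOfRunningMax_apply_of_mem hk).symm)
  exact hkj.not_gt (strictMonoOn_permOfRunningMax hj hk hjk)

def Staircase (n : ℕ) : Type := {f : Fin n → Fin n // Monotone f ∧ ∀ i, i ≤ f i}

noncomputable def avoids321EquivStaircase (n : ℕ) :
    {π : Equiv.Perm (Fin n) // Avoids321 π} ≃ Staircase n where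
  toFun π := ⟨runningMax π.1, monotone_runningMax, le_runningMax_self π.1.injective⟩
  invFun f := ⟨permOfRunningMax f.1, avoids321_permOfRunningMax f.2.1 f.2.2⟩
  left_inv π := Subtype.ext (permOfRunningMax_runningMax π.2.strictMonoOn_compl_records)
  right_inv f := Subtype.ext (runningMax_permOfRunningMax f.2.1 f.2.2)

end Avoids321

namespace Staircase

variable {n : ℕ}

def glue (j : Fin (n + 1)) (a : Fin j → Fin j) (b : Fin (n - j) → Fin (n - j))
    (i : Fin (n + 1)) : Fin (n + 1) :=
  if h : i < j then ⟨a ⟨i, h⟩ + 1, by omega⟩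
  else if h' : i = j then j
  else ⟨b ⟨i - j - 1, by omega⟩ + j + 1, by omega⟩

variable {j : Fin (n + 1)} {a : Fin j → Fin j} {b : Fin (n - j) → Fin (n - j)} {i : Fin (n + 1)}

theorem val_glue_of_lt (h : i < j) : (glue j a b i : ℕ) = a ⟨i, h⟩ + 1 := by
  simp [glue, h]

theorem glue_self : glue j a b j = j := by simp [glue]

theorem val_glue_of_gt (h : j < i) : (glue j a b i : ℕ) = b ⟨i - j - 1, by omega⟩ + j + 1 := by
  simp [glue, h.not_gt, h.ne']

theorem monotone_glue (ha : Monotone a) (hb : Monotone b) : Monotone (glue j a b) := by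
  intro i i' hii'
  rw [Fin.le_def]
  rcases lt_trichotomy i j with hi | hi | hi <;> rcases lt_trichotomy i' j with hi' | hi' | hi'
  · have := ha (show (⟨i, hi⟩ : Fin j) ≤ ⟨i', hi'⟩ from hii')
    rw [val_glue_of_lt hi, val_glue_of_lt hi']
    exact Nat.succ_le_succ this
  · rw [val_glue_of_lt hi, hi', glue_self]; omega
  · rw [val_glue_of_lt hi, val_glue_of_gt hi']; omega
  · omega
  · rw [hi, hi']
  · rw [hi, glue_self, val_glue_of_gt hi']; omega
  · omega
  · omega
  · have := hb (show (⟨i - j - 1, by omega⟩ : Fin (n - j)) ≤ ⟨i' - j - 1, by omega⟩ from by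
      rw [Fin.mk_le_mk]; omega)
    rw [val_glue_of_gt hi, val_glue_of_gt hi']
    rw [Fin.le_def] at this
    omega

theorem le_glue (ha : ∀ i, i ≤ a i) (hb : ∀ i, i ≤ b i) (i : Fin (n + 1)) : i ≤ glue j a b i := by
  rw [Fin.le_def]
  rcases lt_trichotomy i j with hi | hi | hi
  · have := ha ⟨i, hi⟩
    rw [val_glue_of_lt hi]
    rw [Fin.le_def] at this
    exact Nat.le_succ_of_le this
  · rw [hi, glue_self]
  · have := hb ⟨i - j - 1, by omega⟩
    rw [val_glue_of_gt hi]
    rw [Fin.le_def] at this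
    simp only at this
    omega

theorem lt_glue_of_lt (ha : ∀ i, i ≤ a i) (hi : i < j) : i < glue j a b i := by
  have := ha ⟨i, hi⟩
  rw [Fin.lt_def, val_glue_of_lt hi]
  rw [Fin.le_def] at this
  exact Nat.lt_succ_of_le this

theorem isLeast_glue (ha : ∀ i, i ≤ a i) : IsLeast {i | glue j a b i = i} j :=
  ⟨glue_self, fun _ hi => not_lt.1 fun hij => (lt_glue_of_lt ha hij).ne' hi⟩

theorem glue_inj {a' : Fin j → Fin j} {b' : Fin (n - j) → Fin (n - j)} :
    glue j a b = glue j a' b' ↔ a = a' ∧ b = b' := by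
  refine ⟨fun h => ⟨funext fun x => Fin.ext ?_, funext fun x => Fin.ext ?_⟩,
    fun h => h.1 ▸ h.2 ▸ rfl⟩
  · have hx : (Fin.castLE (by omega) x : Fin (n + 1)) < j := x.isLt
    have := congrArg Fin.val (congrFun h (Fin.castLE (by omega) x))
    rw [val_glue_of_lt hx, val_glue_of_lt hx] at this
    exact Nat.succ_injective this
  · have hx : j < (⟨j + 1 + x, by omega⟩ : Fin (n + 1)) := by rw [Fin.lt_def]; simp only; omega
    have := congrArg Fin.val (congrFun h ⟨j + 1 + x, by omega⟩)
    have hx' : (⟨j + 1 + x - j - 1, by omega⟩ : Fin (n - j)) = x := Fin.ext (by simp only; omega)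
    rwa [val_glue_of_gt hx, val_glue_of_gt hx, hx', Nat.add_right_cancel_iff,
      Nat.add_right_cancel_iff] at this

theorem exists_lower_staircase {f : Fin (n + 1) → Fin (n + 1)} (hf : Monotone f)
    (hfj : f j = j) (hlt : ∀ i < j, i < f i) :
    ∃ a : Staircase j, ∀ i (hi : i < j), (f i : ℕ) = a.1 ⟨i, hi⟩ + 1 := by
  have hpos (x : Fin j) : (x : ℕ) < f (Fin.castLE (by omega) x) :=
    hlt (Fin.castLE (by omega) x) x.isLt
  refine ⟨⟨fun x => ⟨f (Fin.castLE (by omega) x) - 1, ?_⟩, fun x y hxy => ?_, fun x => ?_⟩,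
    fun i hi => ?_⟩
  · have hfx : f (Fin.castLE (by omega) x) ≤ f j := hf (Fin.le_def.2 x.isLt.le)
    have := hpos x
    rw [hfj, Fin.le_def] at hfx
    omega
  · have := hf (show Fin.castLE (by omega) x ≤ Fin.castLE (by omega) y from hxy)
    rw [Fin.mk_le_mk]
    omega
  · exact Nat.le_sub_one_of_lt (hpos x)
  · have := hlt i hi
    simp only [Fin.castLE_mk, Fin.eta]
    omega

theorem exists_upper_staircase {f : Fin (n + 1) → Fin (n + 1)} (hf : Monotone f)
    (hle : ∀ i, i ≤ f i) :
    ∃ b : Staircase (n - j), ∀ i (hi : j < i), (f i : ℕ) = b.1 ⟨i - j - 1, by omega⟩ + j + 1 := by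
  have hgt (x : Fin (n - j)) : j + 1 + (x : ℕ) ≤ f ⟨j + 1 + x, by omega⟩ :=
    hle ⟨j + 1 + x, by omega⟩
  refine ⟨⟨fun x => ⟨f ⟨j + 1 + x, by omega⟩ - (j + 1), ?_⟩, fun x y hxy => ?_, fun x => ?_⟩,
    fun i hi => ?_⟩
  · have := x.isLt
    omega
  · have := hf (show (⟨j + 1 + x, by omega⟩ : Fin (n + 1)) ≤ ⟨j + 1 + y, by omega⟩ from
      Fin.mk_le_mk.2 (by rw [Fin.le_def] at hxy; omega))
    rw [Fin.mk_le_mk]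
    omega
  · have := hgt x
    rw [Fin.le_def]
    simp only
    omega
  · have hidx : (⟨j + 1 + (i - j - 1), by omega⟩ : Fin (n + 1)) = i :=
      Fin.ext (by simp only; omega)
    have := hle i
    simp only [hidx]
    rw [Fin.le_def, Fin.lt_def] at *
    omega

theorem exists_glue_eq {f : Fin (n + 1) → Fin (n + 1)} (hf : Monotone f) (hle : ∀ i, i ≤ f i)
    (hj : IsLeast {i | f i = i} j) :
    ∃ a : Staircase j, ∃ b : Staircase (n - j), glue j a.1 b.1 = f := by
  have hlt : ∀ i < j, i < f i := fun i hi => (hle i).lt_of_ne fun h => (hj.2 h.symm).not_gt hi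
  obtain ⟨a, ha⟩ := exists_lower_staircase hf hj.1 hlt
  obtain ⟨b, hb⟩ := exists_upper_staircase (j := j) hf hle
  refine ⟨a, b, funext fun i => ?_⟩
  rcases lt_trichotomy i j with hi | rfl | hi
  · exact Fin.ext ((val_glue_of_lt hi).trans (ha i hi).symm)
  · exact glue_self.trans hj.1.symm
  · exact Fin.ext ((val_glue_of_gt hi).trans (hb i hi).symm)

def join (p : Σ j : Fin (n + 1), Staircase j × Staircase (n - j)) : Staircase (n + 1) :=
  ⟨glue p.1 p.2.1.1 p.2.2.1, monotone_glue p.2.1.2.1 p.2.2.2.1, le_glue p.2.1.2.2 p.2.2.2.2⟩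

theorem join_bijective : Bijective (join (n := n)) := by
  constructor
  · rintro ⟨j, a, b⟩ ⟨j', a', b'⟩ h
    have h' : glue j a.1 b.1 = glue j' a'.1 b'.1 := congrArg Subtype.val h
    obtain rfl : j = j' := (isLeast_glue a.2.2).unique (h' ▸ isLeast_glue a'.2.2)
    obtain ⟨ha, hb⟩ := glue_inj.1 h'
    rw [Subtype.ext ha, Subtype.ext hb]
  · intro f
    have hne : {i | f.1 i = i}.Nonempty := ⟨Fin.last n, le_antisymm (Fin.le_last _) (f.2.2 _)⟩
    obtain ⟨a, b, h⟩ := exists_glue_eq f.2.1 f.2.2 (isLeast_csInf hne)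
    exact ⟨⟨_, a, b⟩, Subtype.ext h⟩

instance : Finite (Staircase n) := Subtype.finite

theorem card_eq_catalan : ∀ n, Nat.card (Staircase n) = catalan n
  | 0 => by
    rw [catalan_zero, Nat.card_eq_one_iff_exists]
    refine ⟨⟨Fin.elim0, fun i => i.elim0, fun i => i.elim0⟩, fun _ => ?_⟩
    exact Subtype.ext (funext fun i => i.elim0)
  | n + 1 => by
    rw [← Nat.card_congr (Equiv.ofBijective _ join_bijective), Nat.card_sigma, catalan_succ]
    refine Finset.sum_congr rfl fun j _ => ?_
    rw [Nat.card_prod, card_eq_catalan j, card_eq_catalan (n - j)]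

end Staircase

theorem card_avoids321_eq_catalan (n : ℕ) :
    Nat.card {π : Equiv.Perm (Fin n) // Avoids321 π} =
      (2 * n).choose n / (n + 1) := by
  rw [Nat.card_congr (avoids321EquivStaircase n), Staircase.card_eq_catalan,
    catalan_eq_centralBinom_div, Nat.centralBinom_eq_two_mul_choose]
end
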